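/- arXiv:1905.05718 — 2 statements merged into one kernel-verified Lean document; each statement's English description precedes it below -/
import Mathlib

section
/- Let (X, μ) be a σ-finite measure space, let f : X × X → ℂ be measurable with f(x, y) = −f(y, x) for all x, y, and let Φ_1, …, Φ_{2n} : X → ℂ be measurable functions such that (x,y) ↦ Φ_i(x)Φ_j(y)f(x,y) is integrable on X × X for every i, j, and such that (x_1,…,x_{2n}) ↦ (∏_{ℓ=1}^{2n} Φ_ℓ(x_ℓ)) · Pf[f(x_i, x_j)]_{1≤i,j≤2n} is integrable on X^{2n}. Then ∫_{X^{2n}} (∏_{ℓ=1}^{2n} Φ_ℓ(x_ℓ)) Pf[f(x_i, x_j)]_{1≤i,j≤2n} dμ^{⊗2n} = Pf[ ∫_{X×X} Φ_i(x) Φ_j(y) f(x, y) dμ(x) dμ(y) ]_{1≤i,j≤2n}. -/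
open scoped BigOperators
open MeasureTheory

/-- The Pfaffian of a `2n × 2n` matrix:
`Pf(A) = (1/(2^n n!)) ∑_{σ ∈ S_{2n}} sign(σ) ∏_{p=1}^{n} A_{σ(2p−1),σ(2p)}`. -/
noncomputable def pfaffian {n : ℕ} (A : Matrix (Fin (2*n)) (Fin (2*n)) ℂ) : ℂ :=
  (1 / ((2:ℂ)^n * (n.factorial : ℂ))) *
    ∑ σ : Equiv.Perm (Fin (2*n)),
      ((Equiv.Perm.sign σ : ℤ) : ℂ) *
        ∏ p : Fin n,
          A (σ ⟨2*(p:ℕ), by have := p.isLt; omega⟩)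
            (σ ⟨2*(p:ℕ)+1, by have := p.isLt; omega⟩)

/-- The even index `2p` in `Fin (2*n)`. -/
def pairIdx0 {n : ℕ} (p : Fin n) : Fin (2*n) := ⟨2*(p:ℕ), by have := p.isLt; omega⟩

/-- The odd index `2p+1` in `Fin (2*n)`. -/
def pairIdx1 {n : ℕ} (p : Fin n) : Fin (2*n) := ⟨2*(p:ℕ)+1, by have := p.isLt; omega⟩

/-- `Fin n ⊕ Fin n ≃ Fin (2*n)`, sending `inl p ↦ 2p` and `inr p ↦ 2p+1`. -/
def sumPairs (n : ℕ) : (Fin n ⊕ Fin n) ≃ Fin (2*n) where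
  toFun := Sum.elim pairIdx0 pairIdx1
  invFun i := if h : (i:ℕ) % 2 = 0 then .inl ⟨(i:ℕ)/2, by have := i.isLt; omega⟩
    else .inr ⟨(i:ℕ)/2, by have := i.isLt; omega⟩
  left_inv := by
    rintro (p | p)
    · simp only [Sum.elim_inl, pairIdx0]
      show (if h : 2*(p:ℕ) % 2 = 0 then _ else _) = _
      rw [dif_pos (by omega)]
      congr 1
      exact Fin.ext (by show 2*(p:ℕ)/2 = (p:ℕ); omega)
    · simp only [Sum.elim_inr, pairIdx1]
      show (if h : (2*(p:ℕ)+1) % 2 = 0 then _ else _) = _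
      rw [dif_neg (by omega)]
      congr 1
      exact Fin.ext (by show (2*(p:ℕ)+1)/2 = (p:ℕ); omega)
  right_inv := by
    intro i
    simp only
    by_cases h : (i:ℕ) % 2 = 0
    · rw [dif_pos h]
      exact Fin.ext (by show 2*((i:ℕ)/2) = (i:ℕ); omega)
    · rw [dif_neg h]
      exact Fin.ext (by show 2*((i:ℕ)/2)+1 = (i:ℕ); omega)

/-- The key computation: for a fixed permutation `σ`, the integrand
`(∏ₗ Φₗ(yₗ)) ∏ₚ f(y_{σ(2p)}, y_{σ(2p+1)})` is integrable over `X^{2n}` and its integral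
factors as the product over `p` of the pairwise double integrals. -/
lemma debruijn_key {X : Type*} [MeasurableSpace X] (n : ℕ) (μ : Measure X) [SigmaFinite μ]
    (f : X × X → ℂ) (Φ : Fin (2*n) → X → ℂ)
    (hint : ∀ i j : Fin (2*n),
      Integrable (fun p : X × X => Φ i p.1 * Φ j p.2 * f p) (μ.prod μ))
    (σ : Equiv.Perm (Fin (2*n))) :
    Integrable (fun y : Fin (2*n) → X =>
        (∏ ℓ, Φ ℓ (y ℓ)) * ∏ p : Fin n, f (y (σ (pairIdx0 p)), y (σ (pairIdx1 p))))
      (Measure.pi fun _ => μ) ∧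
    ∫ y : Fin (2*n) → X,
        (∏ ℓ, Φ ℓ (y ℓ)) * ∏ p : Fin n, f (y (σ (pairIdx0 p)), y (σ (pairIdx1 p)))
        ∂(Measure.pi fun _ => μ)
      = ∏ p : Fin n,
          ∫ q : X × X, Φ (σ (pairIdx0 p)) q.1 * Φ (σ (pairIdx1 p)) q.2 * f q ∂(μ.prod μ) := by
  classical
  set κ : (Fin n ⊕ Fin n) ≃ Fin (2*n) := (sumPairs n).trans σ with hκ
  set T : (Fin n → X × X) ≃ᵐ (Fin (2*n) → X) :=
    (MeasurableEquiv.arrowProdEquivProdArrow X X (Fin n)).trans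
      ((MeasurableEquiv.sumPiEquivProdPi (fun _ : Fin n ⊕ Fin n => X)).symm.trans
        (MeasurableEquiv.piCongrLeft (fun _ => X) κ)) with hTdef
  have hT : MeasurePreserving T (Measure.pi fun _ : Fin n => μ.prod μ)
      (Measure.pi fun _ : Fin (2*n) => μ) := by
    have h1 := measurePreserving_arrowProdEquivProdArrow X X (Fin n)
      (fun _ => μ) (fun _ => μ)
    have h2 := measurePreserving_sumPiEquivProdPi_symm
      (X := fun _ : Fin n ⊕ Fin n => X) (fun _ => μ)
    have h3 := measurePreserving_piCongrLeft (fun _ : Fin (2*n) => μ) κ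
    exact (h3.comp h2).comp h1
  have hTapply : ∀ (w : Fin n → X × X) (j : Fin n ⊕ Fin n),
      T w (κ j) = Sum.elim (fun p => (w p).1) (fun p => (w p).2) j := by
    intro w j
    show (MeasurableEquiv.piCongrLeft (fun _ : Fin (2*n) => X) κ) _ (κ j) = _
    rw [MeasurableEquiv.piCongrLeft]
    show Equiv.piCongrLeft (fun _ : Fin (2*n) => X) κ _ (κ j) = _
    rw [Equiv.piCongrLeft_apply_apply]
    cases j <;> rfl
  have hk0 : ∀ p : Fin n, σ (pairIdx0 p) = κ (Sum.inl p) := fun _ => rfl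
  have hk1 : ∀ p : Fin n, σ (pairIdx1 p) = κ (Sum.inr p) := fun _ => rfl
  have hcomp : ∀ w : Fin n → X × X,
      ((∏ ℓ, Φ ℓ (T w ℓ)) * ∏ p : Fin n, f (T w (σ (pairIdx0 p)), T w (σ (pairIdx1 p))))
        = ∏ p : Fin n,
            (Φ (σ (pairIdx0 p)) (w p).1 * Φ (σ (pairIdx1 p)) (w p).2 * f (w p)) := by
    intro w
    have h1 : (∏ ℓ, Φ ℓ (T w ℓ)) = ∏ j : Fin n ⊕ Fin n, Φ (κ j) (T w (κ j)) :=
      (Equiv.prod_comp κ (fun i => Φ i (T w i))).symm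
    rw [h1, Fintype.prod_sum_type]
    simp only [hTapply, hk0, hk1, Sum.elim_inl, Sum.elim_inr]
    rw [← Finset.prod_mul_distrib, ← Finset.prod_mul_distrib]
  letI : MeasureSpace (X × X) := ⟨μ.prod μ⟩
  haveI : SigmaFinite (volume : Measure (X × X)) := by
    show SigmaFinite (μ.prod μ); infer_instance
  have hG : ∀ p : Fin n, Integrable
      (fun q : X × X => Φ (σ (pairIdx0 p)) q.1 * Φ (σ (pairIdx1 p)) q.2 * f q) volume :=
    fun p => hint _ _
  have hGint : Integrable
      (fun w : Fin n → X × X => ∏ p : Fin n,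
        (Φ (σ (pairIdx0 p)) (w p).1 * Φ (σ (pairIdx1 p)) (w p).2 * f (w p)))
      (Measure.pi fun _ : Fin n => μ.prod μ) := by
    have := Integrable.fintype_prod (E := X × X)
      (f := fun (p : Fin n) (q : X × X) =>
        Φ (σ (pairIdx0 p)) q.1 * Φ (σ (pairIdx1 p)) q.2 * f q) hG
    exact this
  constructor
  · rw [← hT.integrable_comp_emb T.measurableEmbedding]
    refine hGint.congr (Filter.Eventually.of_forall fun w => ?_)
    exact (hcomp w).symm
  · rw [← hT.integral_comp']
    rw [show (fun w : Fin n → X × X =>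
        (∏ ℓ, Φ ℓ (T w ℓ)) * ∏ p : Fin n, f (T w (σ (pairIdx0 p)), T w (σ (pairIdx1 p))))
      = fun w => ∏ p : Fin n,
          (Φ (σ (pairIdx0 p)) (w p).1 * Φ (σ (pairIdx1 p)) (w p).2 * f (w p))
      from funext hcomp]
    exact MeasureTheory.integral_fintype_prod_eq_prod (ι := Fin n)
      (fun (p : Fin n) (q : X × X) =>
        Φ (σ (pairIdx0 p)) q.1 * Φ (σ (pairIdx1 p)) q.2 * f q)

/-- De Bruijn's integration identity:
`∫_{X^{2n}} (∏ₗ Φₗ(xₗ)) Pf[f(xᵢ,xⱼ)] dμ^{⊗2n} = Pf[∫∫ Φᵢ(x)Φⱼ(y) f(x,y) dμ(x)dμ(y)]`. -/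
theorem de_bruijn_pfaffian (n : ℕ) (hn : 1 ≤ n)
    {X : Type*} [MeasurableSpace X] (μ : Measure X) [SigmaFinite μ]
    (f : X × X → ℂ) (hf : Measurable f)
    (hanti : ∀ x y : X, f (x, y) = - f (y, x))
    (Φ : Fin (2*n) → X → ℂ) (hΦ : ∀ i, Measurable (Φ i))
    (hint : ∀ i j : Fin (2*n),
      Integrable (fun p : X × X => Φ i p.1 * Φ j p.2 * f p) (μ.prod μ))
    (hbig : Integrable
      (fun y : Fin (2*n) → X =>
        (∏ ℓ : Fin (2*n), Φ ℓ (y ℓ)) * pfaffian (Matrix.of fun i j => f (y i, y j)))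
      (Measure.pi fun _ => μ)) :
    ∫ y : Fin (2*n) → X,
        (∏ ℓ : Fin (2*n), Φ ℓ (y ℓ)) * pfaffian (Matrix.of fun i j => f (y i, y j))
        ∂(Measure.pi fun _ => μ)
      = pfaffian (Matrix.of fun i j =>
          ∫ p : X × X, Φ i p.1 * Φ j p.2 * f p ∂(μ.prod μ)) := by
  classical
  have key := debruijn_key n μ f Φ hint
  set c : ℂ := 1 / ((2:ℂ)^n * (n.factorial : ℂ)) with hc
  have expand : ∀ y : Fin (2*n) → X,
      (∏ ℓ : Fin (2*n), Φ ℓ (y ℓ)) * pfaffian (Matrix.of fun i j => f (y i, y j))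
        = c * ∑ σ : Equiv.Perm (Fin (2*n)), ((Equiv.Perm.sign σ : ℤ) : ℂ) *
            ((∏ ℓ, Φ ℓ (y ℓ)) *
              ∏ p : Fin n, f (y (σ (pairIdx0 p)), y (σ (pairIdx1 p)))) := by
    intro y
    rw [pfaffian, ← hc]
    simp only [Matrix.of_apply, Finset.mul_sum]
    refine Finset.sum_congr rfl (fun σ _ => ?_)
    unfold pairIdx0 pairIdx1
    ring
  simp only [expand]
  rw [MeasureTheory.integral_const_mul]
  rw [MeasureTheory.integral_finset_sum _ (fun σ _ => ((key σ).1.const_mul _))]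
  rw [pfaffian, ← hc]
  congr 1
  refine Finset.sum_congr rfl (fun σ _ => ?_)
  rw [MeasureTheory.integral_const_mul, (key σ).2]
  simp only [Matrix.of_apply]
  unfold pairIdx0 pairIdx1
  rfl
end

section
/- Let n ≥ 1, let λ_1, …, λ_n be pairwise distinct complex numbers and let w be a complex number such that for every permutation P of {1,…,n} and every j ∈ {1,…,n}, −j w + i(λ_{P(n)} + ⋯ + λ_{P(n+1−j)}) + j²/2 ≠ 0, and w − 1/2 − iλ_j ≠ 0 for all j. Then ∑_{P ∈ S_n} ∏_{1 ≤ k < ℓ ≤ n} (1 + i/(λ_{P(ℓ)} − λ_{P(k)})) · ∏_{j=1}^{n} (−1)/( −j w + i(λ_{P(n)} + ⋯ + λ_{P(n+1−j)}) + j²/2 ) = ∏_{j=1}^{n} 1/( w − 1/2 − i λ_j ). -/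
open Finset

section helpers

/-- Sum over a tail-filter of `Fin (n+1)` reduces to `Fin n` when the cutoff is positive. -/
lemma sum_succ_filter (n c : ℕ) (hc : 0 < c) (f : Fin (n+1) → ℂ) :
    ∑ l ∈ Finset.univ.filter (fun l : Fin (n+1) => c ≤ (l:ℕ)), f l
      = ∑ l ∈ Finset.univ.filter (fun l : Fin n => c - 1 ≤ (l:ℕ)), f l.succ := by
  rw [Finset.sum_filter, Finset.sum_filter, Fin.sum_univ_succ]
  have h0 : ¬ (c ≤ ((0 : Fin (n+1)):ℕ)) := by simpa using hc.ne'
  rw [if_neg h0, zero_add]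
  apply Finset.sum_congr rfl
  intro i _
  have : (c ≤ ((i.succ : Fin (n+1)):ℕ)) ↔ (c - 1 ≤ (i:ℕ)) := by
    rw [Fin.val_succ]
    omega
  rw [if_congr this rfl rfl]

lemma filter_zero_le (n : ℕ) :
    Finset.univ.filter (fun l : Fin (n+1) => 0 ≤ (l:ℕ)) = Finset.univ := by
  apply Finset.filter_true_of_mem
  intro l _
  exact Nat.zero_le _

end helpers


/-- Partial fraction identity for `t * ∏ (x r - t + 1)/(x r - t)`. -/
lemma pf {α : Type*} [DecidableEq α] (x : α → ℂ)
    (hx : ∀ k l, k ≠ l → x k ≠ x l) :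
    ∀ (S : Finset α) (t : ℂ), (∀ r ∈ S, t ≠ x r) →
    t * ∏ r ∈ S, (x r - t + 1) / (x r - t)
      = t - S.card
        - ∑ r ∈ S, (x r * ∏ y ∈ S.erase r, (x y - x r + 1) / (x y - x r)) / (t - x r) := by
  intro S
  induction S using Finset.induction_on with
  | empty => simp
  | insert z S hz ih =>
    intro t ht
    have htz : t ≠ x z := ht z (mem_insert_self _ _)
    have htS : ∀ r ∈ S, t ≠ x r := fun r hr => ht r (mem_insert_of_mem hr)
    have hzS : ∀ r ∈ S, x z ≠ x r := fun r hr => hx z r (ne_of_mem_of_not_mem hr hz).symm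
    set u := x z with hu
    set k := (S.card : ℂ) with hk
    set c : α → ℂ := fun r => x r * ∏ y ∈ S.erase r, (x y - x r + 1) / (x y - x r) with hc
    have IHt := ih t htS
    have IHu := ih u hzS
    have hut : u - t ≠ 0 := sub_ne_zero.mpr (Ne.symm htz)
    have htu : t - u ≠ 0 := sub_ne_zero.mpr htz
    rw [Finset.prod_insert hz, Finset.sum_insert hz, Finset.erase_insert hz]
    have hsum : ∑ r ∈ S, (x r * ∏ y ∈ (insert z S).erase r, (x y - x r + 1) / (x y - x r)) / (t - x r)
        = ∑ r ∈ S, c r * ((u - x r + 1)/(u - x r)) / (t - x r) := by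
      apply Finset.sum_congr rfl
      intro r hr
      rw [Finset.erase_insert_of_ne (ne_of_mem_of_not_mem hr hz).symm,
        Finset.prod_insert (fun h => hz (Finset.mem_of_mem_erase h))]
      simp only [hc, ← hu]
      ring
    rw [hsum]
    have hcz : u * ∏ y ∈ S, (x y - u + 1) / (x y - u)
        = u - k - ∑ r ∈ S, c r / (u - x r) := IHu
    rw [show (x z - t + 1) / (x z - t) = (u - t + 1)/(u - t) from rfl, hcz]
    have expand : t * ((u - t + 1) / (u - t) * ∏ r ∈ S, (x r - t + 1) / (x r - t))
        = (u - t + 1) / (u - t) * (t * ∏ r ∈ S, (x r - t + 1) / (x r - t)) := by ring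
    rw [expand, IHt, Finset.card_insert_of_notMem hz]
    push_cast
    rw [← hk]
    -- now a scalar/summation identity
    have per : ∀ r ∈ S, (u - t + 1)/(u - t) * (c r/(t - x r))
        = c r * ((u - x r + 1)/(u - x r)) / (t - x r) - c r / (u - x r) / (t - u) := by
      intro r hr
      have h1 : t - x r ≠ 0 := sub_ne_zero.mpr (htS r hr)
      have h2 : u - x r ≠ 0 := sub_ne_zero.mpr (hzS r hr)
      field_simp
      ring
    rw [mul_sub, Finset.mul_sum, Finset.sum_congr rfl per, Finset.sum_sub_distrib]
    have hdivsum : ∑ r ∈ S, c r / (u - x r) / (t - u)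
        = (∑ r ∈ S, c r / (u - x r)) / (t - u) := by
      rw [Finset.sum_div]
    rw [hdivsum]
    set sig := ∑ r ∈ S, c r / (u - x r) with hsig
    set sig' := ∑ r ∈ S, c r * ((u - x r + 1)/(u - x r)) / (t - x r) with hsig'
    have htu' : t - x z ≠ 0 := htu
    field_simp
    ring



lemma star {α : Type*} [DecidableEq α] (x : α → ℂ)
    (hx : ∀ k l, k ≠ l → x k ≠ x l) (S : Finset α) :
    ∑ r ∈ S, x r * ∏ y ∈ S.erase r, (x y - x r + 1) / (x y - x r)
      = (∑ r ∈ S, x r) - (S.card : ℂ) * ((S.card : ℂ) - 1) / 2 := by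
  induction S using Finset.induction_on with
  | empty => simp
  | insert z S hz ih =>
    have hzS : ∀ r ∈ S, x z ≠ x r := fun r hr => hx z r (ne_of_mem_of_not_mem hr hz).symm
    set u := x z with hu
    set c : α → ℂ := fun r => x r * ∏ y ∈ S.erase r, (x y - x r + 1) / (x y - x r) with hc
    have hpf := pf x hx S u hzS
    rw [Finset.sum_insert hz, Finset.erase_insert hz]
    have hsum : ∑ r ∈ S, x r * ∏ y ∈ (insert z S).erase r, (x y - x r + 1) / (x y - x r)
        = ∑ r ∈ S, (c r + c r / (u - x r)) := by
      apply Finset.sum_congr rfl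
      intro r hr
      rw [Finset.erase_insert_of_ne (ne_of_mem_of_not_mem hr hz).symm,
        Finset.prod_insert (fun h => hz (Finset.mem_of_mem_erase h))]
      have h2 : u - x r ≠ 0 := sub_ne_zero.mpr (hzS r hr)
      have hrw : (u - x r + 1) / (u - x r) = 1 + 1/(u - x r) := by
        rw [add_div, div_self h2]
      simp only [hc, ← hu]
      rw [hrw]
      ring
    rw [hsum, Finset.sum_add_distrib]
    have h1 : ∑ r ∈ S, c r / (u - x r)
        = u - S.card - u * ∏ y ∈ S, (x y - u + 1) / (x y - u) := by
      rw [hpf]; ring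
    rw [h1, ih, Finset.sum_insert hz, Finset.card_insert_of_notMem hz]
    push_cast
    ring


section main

/-- denominator -/
noncomputable def Dden (w : ℂ) {N : ℕ} (lam : Fin N → ℂ) (P : Equiv.Perm (Fin N)) (j : Fin N) : ℂ :=
  -(((j:ℕ):ℂ)+1) * w
    + Complex.I * (∑ l ∈ Finset.univ.filter (fun l : Fin N => N - ((j:ℕ)+1) ≤ (l:ℕ)), lam (P l))
    + (((j:ℕ):ℂ)+1)^2 / 2

theorem aux (w : ℂ) : ∀ (n : ℕ) (lam : Fin n → ℂ),
    (∀ k l : Fin n, k ≠ l → lam k ≠ lam l) →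
    (∀ P : Equiv.Perm (Fin n), ∀ j : Fin n, Dden w lam P j ≠ 0) →
    (∀ j : Fin n, w - 1/2 - Complex.I * lam j ≠ 0) →
    ∑ P : Equiv.Perm (Fin n),
      (∏ k : Fin n, ∏ l ∈ Finset.Ioi k, (1 + Complex.I / (lam (P l) - lam (P k)))) *
      ∏ j : Fin n, (-1) / Dden w lam P j
      = ∏ j : Fin n, 1 / (w - 1/2 - Complex.I * lam j) := by
  intro n
  induction n with
  | zero =>
      intro lam _ _ _
      simp
  | succ n ih =>
      intro lam hdist hden hden2
      classical
      -- the injection of the remaining indices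
      set g : Fin (n+1) → Fin n → Fin (n+1) := fun m i => Equiv.swap 0 m i.succ with hg
      have hginj : ∀ m, Function.Injective (g m) :=
        fun m => (Equiv.injective _).comp (Fin.succ_injective n)
      have hgne : ∀ m i, g m i ≠ m := by
        intro m i h
        have h0 : Equiv.swap (0 : Fin (n+1)) m 0 = m := Equiv.swap_apply_left 0 m
        exact Fin.succ_ne_zero i ((Equiv.swap 0 m).injective (h.trans h0.symm))
      have himg : ∀ m, Finset.image (g m) Finset.univ = Finset.univ.erase m := by
        intro m
        ext r
        simp only [Finset.mem_image, Finset.mem_erase, Finset.mem_univ, and_true, true_and]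
        constructor
        · rintro ⟨i, rfl⟩; exact hgne m i
        · intro hr
          have h1 : Equiv.swap (0 : Fin (n+1)) m r ≠ 0 := by
            intro h
            have h0 : Equiv.swap (0 : Fin (n+1)) m m = 0 := Equiv.swap_apply_right 0 m
            exact hr ((Equiv.swap 0 m).injective (h.trans h0.symm))
          obtain ⟨i, hi⟩ := Fin.exists_succ_eq.mpr h1
          exact ⟨i, by
            show Equiv.swap (0 : Fin (n+1)) m i.succ = r
            rw [hi]; exact Equiv.swap_apply_self _ _ _⟩
      set lam' : Fin (n+1) → Fin n → ℂ := fun m i => lam (g m i) with hlam'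
      have hdist' : ∀ m, ∀ k l : Fin n, k ≠ l → lam' m k ≠ lam' m l :=
        fun m k l h => hdist _ _ (fun e => h (hginj m e))
      have hden2' : ∀ m, ∀ j : Fin n, w - 1/2 - Complex.I * lam' m j ≠ 0 :=
        fun m j => hden2 (g m j)
      have hP0 : ∀ (m : Fin (n+1)) (σ : Equiv.Perm (Fin n)),
          (Equiv.Perm.decomposeFin.symm (m, σ)) 0 = m :=
        fun m σ => Equiv.Perm.decomposeFin_symm_apply_zero m σ
      have hPs : ∀ (m : Fin (n+1)) (σ : Equiv.Perm (Fin n)) (i : Fin n),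
          (Equiv.Perm.decomposeFin.symm (m, σ)) i.succ = g m (σ i) :=
        fun m σ i => Equiv.Perm.decomposeFin_symm_apply_succ σ m i
      set Dlast : ℂ := -(((n:ℕ):ℂ)+1) * w + Complex.I * (∑ l, lam l) + (((n:ℕ):ℂ)+1)^2/2
        with hDlastdef
      have hDlast : ∀ (P : Equiv.Perm (Fin (n+1))), Dden w lam P (Fin.last n) = Dlast := by
        intro P
        unfold Dden
        rw [Fin.val_last, Nat.sub_self, filter_zero_le, Equiv.sum_comp P lam]
      have hDcast : ∀ (m : Fin (n+1)) (σ : Equiv.Perm (Fin n)) (j' : Fin n),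
          Dden w lam (Equiv.Perm.decomposeFin.symm (m, σ)) j'.castSucc
            = Dden w (lam' m) σ j' := by
        intro m σ j'
        unfold Dden
        rw [Fin.coe_castSucc]
        have hc : 0 < n - (j' : ℕ) := Nat.sub_pos_of_lt j'.isLt
        have hsub : n + 1 - ((j' : ℕ) + 1) = n - (j' : ℕ) := by omega
        rw [hsub, sum_succ_filter n _ hc (fun l => lam ((Equiv.Perm.decomposeFin.symm (m, σ)) l))]
        have hsub2 : n - (j' : ℕ) - 1 = n - ((j' : ℕ) + 1) := by omega
        rw [hsub2]
        have hs : ∑ l ∈ Finset.univ.filter (fun l : Fin n => n - ((j' : ℕ) + 1) ≤ (l:ℕ)),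
            lam ((Equiv.Perm.decomposeFin.symm (m, σ)) l.succ)
            = ∑ l ∈ Finset.univ.filter (fun l : Fin n => n - ((j' : ℕ) + 1) ≤ (l:ℕ)),
              lam' m (σ l) := by
          apply Finset.sum_congr rfl
          intro l _
          rw [hPs]
        rw [hs]
      -- non-vanishing of the last denominator
      have hDlast_ne : Dlast ≠ 0 := by
        have h := hden 1 (Fin.last n)
        rwa [hDlast 1] at h
      -- per (m, σ) rewriting of the summand
      have hterm : ∀ (m : Fin (n+1)) (σ : Equiv.Perm (Fin n)),
          (∏ k : Fin (n+1), ∏ l ∈ Finset.Ioi k,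
            (1 + Complex.I / (lam ((Equiv.Perm.decomposeFin.symm (m, σ)) l)
              - lam ((Equiv.Perm.decomposeFin.symm (m, σ)) k)))) *
          ∏ j : Fin (n+1), (-1) / Dden w lam (Equiv.Perm.decomposeFin.symm (m, σ)) j
          = ((∏ i : Fin n, (1 + Complex.I / (lam' m i - lam m))) * ((-1) / Dlast)) *
            ((∏ k : Fin n, ∏ l ∈ Finset.Ioi k,
              (1 + Complex.I / (lam' m (σ l) - lam' m (σ k)))) *
            ∏ j : Fin n, (-1) / Dden w (lam' m) σ j) := by
        intro m σ
        have e1 : ∏ k : Fin (n+1), ∏ l ∈ Finset.Ioi k,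
            (1 + Complex.I / (lam ((Equiv.Perm.decomposeFin.symm (m, σ)) l)
              - lam ((Equiv.Perm.decomposeFin.symm (m, σ)) k)))
            = (∏ i : Fin n, (1 + Complex.I / (lam' m (σ i) - lam m))) *
              ∏ k : Fin n, ∏ l ∈ Finset.Ioi k,
                (1 + Complex.I / (lam' m (σ l) - lam' m (σ k))) := by
          rw [Fin.prod_univ_succ]
          congr 1
          · rw [Fin.prod_Ioi_zero]
            apply Finset.prod_congr rfl
            intro i _
            rw [hPs, hP0]
          · apply Finset.prod_congr rfl
            intro k _
            rw [Fin.prod_Ioi_succ]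
            apply Finset.prod_congr rfl
            intro l _
            rw [hPs, hPs]
        have e2 : (∏ i : Fin n, (1 + Complex.I / (lam' m (σ i) - lam m)))
            = ∏ i : Fin n, (1 + Complex.I / (lam' m i - lam m)) :=
          Equiv.prod_comp σ (fun t => 1 + Complex.I / (lam' m t - lam m))
        have e3 : ∏ j : Fin (n+1), (-1) / Dden w lam (Equiv.Perm.decomposeFin.symm (m, σ)) j
            = (∏ j : Fin n, (-1) / Dden w (lam' m) σ j) * ((-1) / Dlast) := by
          rw [Fin.prod_univ_castSucc]
          congr 1
          · apply Finset.prod_congr rfl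
            intro j' _
            rw [hDcast]
          · rw [hDlast]
        rw [e1, e2, e3]
        ring
      -- the inner sum over σ, via the induction hypothesis
      have hinner : ∀ m : Fin (n+1),
          ∑ σ : Equiv.Perm (Fin n),
            (∏ k : Fin (n+1), ∏ l ∈ Finset.Ioi k,
              (1 + Complex.I / (lam ((Equiv.Perm.decomposeFin.symm (m, σ)) l)
                - lam ((Equiv.Perm.decomposeFin.symm (m, σ)) k)))) *
            ∏ j : Fin (n+1), (-1) / Dden w lam (Equiv.Perm.decomposeFin.symm (m, σ)) j
          = ((∏ i : Fin n, (1 + Complex.I / (lam' m i - lam m))) * ((-1) / Dlast)) *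
            ∏ r ∈ Finset.univ.erase m, 1 / (w - 1/2 - Complex.I * lam r) := by
        intro m
        rw [Finset.sum_congr rfl (fun σ _ => hterm m σ), ← Finset.mul_sum]
        have hden' : ∀ (σ : Equiv.Perm (Fin n)) (j' : Fin n), Dden w (lam' m) σ j' ≠ 0 :=
          fun σ j' => by rw [← hDcast m σ j']; exact hden _ _
        rw [ih (lam' m) (hdist' m) hden' (hden2' m)]
        congr 1
        rw [← himg m, Finset.prod_image (fun a _ b _ h => hginj m h)]
      -- the shifted variables
      set x : Fin (n+1) → ℂ := fun r => w - 1/2 - Complex.I * lam r with hx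
      have hx_ne : ∀ r, x r ≠ 0 := hden2
      have hxinj : ∀ k l : Fin (n+1), k ≠ l → x k ≠ x l := by
        intro k l h hxy
        apply hdist k l h
        have hIl : Complex.I * lam k = Complex.I * lam l := by
          have hxy' : w - 1/2 - Complex.I * lam k = w - 1/2 - Complex.I * lam l := hxy
          linear_combination -hxy'
        exact mul_left_cancel₀ Complex.I_ne_zero hIl
      have hPair0 : ∀ m : Fin (n+1), ∏ i : Fin n, (1 + Complex.I / (lam' m i - lam m))
          = ∏ r ∈ Finset.univ.erase m, ((x r - x m + 1) / (x r - x m)) := by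
        intro m
        rw [← himg m, Finset.prod_image (fun a _ b _ h => hginj m h)]
        apply Finset.prod_congr rfl
        intro i _
        have hd : lam (g m i) - lam m ≠ 0 := sub_ne_zero.mpr (hdist _ _ (hgne m i))
        have hxd : x (g m i) - x m = -(Complex.I * (lam (g m i) - lam m)) := by
          simp only [hx]; ring
        have hne2 : -(Complex.I * (lam (g m i) - lam m)) ≠ 0 :=
          neg_ne_zero.mpr (mul_ne_zero Complex.I_ne_zero hd)
        show 1 + Complex.I / (lam (g m i) - lam m) = _
        rw [hxd, add_div, div_self hne2]
        congr 1
        rw [div_eq_div_iff hd hne2]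
        linear_combination (lam m - lam (g m i)) * Complex.I_sq
      have hErase : ∀ m : Fin (n+1), ∏ r ∈ Finset.univ.erase m, (1 / (x r))
          = x m * ∏ r : Fin (n+1), 1 / (x r) := by
        intro m
        have h := Finset.mul_prod_erase Finset.univ (fun r => 1 / (x r)) (Finset.mem_univ m)
        rw [← h, ← mul_assoc, mul_one_div, div_self (hx_ne m), one_mul]
      have hxr : ∀ r, w - 1/2 - Complex.I * lam r = x r := fun r => rfl
      simp only [hxr] at hinner ⊢
      calc
        ∑ P : Equiv.Perm (Fin (n+1)),
            (∏ k : Fin (n+1), ∏ l ∈ Finset.Ioi k, (1 + Complex.I / (lam (P l) - lam (P k)))) *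
            ∏ j : Fin (n+1), (-1) / Dden w lam P j
            = ∑ q : Fin (n+1) × Equiv.Perm (Fin n),
              (∏ k : Fin (n+1), ∏ l ∈ Finset.Ioi k,
                (1 + Complex.I / (lam ((Equiv.Perm.decomposeFin.symm q) l)
                  - lam ((Equiv.Perm.decomposeFin.symm q) k)))) *
              ∏ j : Fin (n+1), (-1) / Dden w lam (Equiv.Perm.decomposeFin.symm q) j :=
          (Equiv.sum_comp Equiv.Perm.decomposeFin.symm _).symm
        _ = ∑ m : Fin (n+1), ∑ σ : Equiv.Perm (Fin n),
              (∏ k : Fin (n+1), ∏ l ∈ Finset.Ioi k,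
                (1 + Complex.I / (lam ((Equiv.Perm.decomposeFin.symm (m, σ)) l)
                  - lam ((Equiv.Perm.decomposeFin.symm (m, σ)) k)))) *
              ∏ j : Fin (n+1), (-1) / Dden w lam (Equiv.Perm.decomposeFin.symm (m, σ)) j :=
          Fintype.sum_prod_type _
        _ = ∑ m : Fin (n+1),
              ((∏ i : Fin n, (1 + Complex.I / (lam' m i - lam m))) * ((-1) / Dlast)) *
                ∏ r ∈ Finset.univ.erase m, 1 / (x r) :=
          Finset.sum_congr rfl (fun m _ => hinner m)
        _ = ∑ m : Fin (n+1), (((-1)/Dlast) * ∏ r : Fin (n+1), 1/(x r)) *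
              (x m * ∏ r ∈ Finset.univ.erase m, ((x r - x m + 1)/(x r - x m))) := by
          apply Finset.sum_congr rfl
          intro m _
          rw [hPair0 m, hErase m]
          ring
        _ = (((-1)/Dlast) * ∏ r : Fin (n+1), 1/(x r)) *
              ∑ m : Fin (n+1), x m * ∏ r ∈ Finset.univ.erase m, ((x r - x m + 1)/(x r - x m)) := by
          rw [Finset.mul_sum]
        _ = ∏ r : Fin (n+1), 1/(x r) := by
          rw [star x hxinj Finset.univ]
          have hcard : ((Finset.univ : Finset (Fin (n+1))).card : ℂ) = (n:ℂ)+1 := by simp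
          have hsumx : ∑ r ∈ Finset.univ, x r
              = ((n:ℂ)+1)*(w - 1/2) - Complex.I * ∑ l : Fin (n+1), lam l := by
            simp only [hx]
            simp only [Finset.sum_sub_distrib, Finset.sum_const, Finset.card_univ,
              Fintype.card_fin, nsmul_eq_mul, ← Finset.mul_sum]
            push_cast
            ring
          rw [hcard, hsumx]
          rw [show ((n:ℂ)+1)*(w - 1/2) - Complex.I * (∑ l : Fin (n+1), lam l)
              - ((n:ℂ)+1)*(((n:ℂ)+1)-1)/2 = -Dlast from by rw [hDlastdef]; push_cast; ring]
          have hone : (-1)/Dlast * (-Dlast) = 1 := by field_simp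
          linear_combination (∏ r : Fin (n+1), 1/(x r)) * hone

end main

open scoped BigOperators

/-- The symmetrization ("miracle") identity:
`∑_{P ∈ Sₙ} ∏_{k<ℓ} (1 + i/(λ_{P(ℓ)} − λ_{P(k)})) ∏_{j=1}^n (−1)/(−jw + i(λ_{P(n)}+⋯+λ_{P(n+1−j)}) + j²/2)`
`= ∏_{j=1}^n 1/(w − 1/2 − iλⱼ)`. -/
theorem miracle_identity (n : ℕ) (hn : 0 < n) (lam : Fin n → ℂ) (w : ℂ)
    (hdist : ∀ k l : Fin n, k ≠ l → lam k ≠ lam l)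
    (hden : ∀ P : Equiv.Perm (Fin n), ∀ j : Fin n,
      -(((j:ℕ):ℂ)+1) * w
        + Complex.I * (∑ l ∈ Finset.univ.filter (fun l : Fin n => n - ((j:ℕ)+1) ≤ (l:ℕ)), lam (P l))
        + (((j:ℕ):ℂ)+1)^2 / 2 ≠ 0)
    (hden2 : ∀ j : Fin n, w - 1/2 - Complex.I * lam j ≠ 0) :
    ∑ P : Equiv.Perm (Fin n),
      (∏ k : Fin n, ∏ l ∈ Finset.Ioi k, (1 + Complex.I / (lam (P l) - lam (P k)))) *
      ∏ j : Fin n, (-1) /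
        (-(((j:ℕ):ℂ)+1) * w
          + Complex.I * (∑ l ∈ Finset.univ.filter (fun l : Fin n => n - ((j:ℕ)+1) ≤ (l:ℕ)), lam (P l))
          + (((j:ℕ):ℂ)+1)^2 / 2)
      = ∏ j : Fin n, 1 / (w - 1/2 - Complex.I * lam j) :=
  aux w n lam hdist hden hden2
end
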